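/- Let G be a group, p a prime, and n ≥ 1 an integer. Fix a set R of representatives of the orbits of the simultaneous conjugation action of G on G_{n,p}. Then the map from the disjoint union, over (g_1, …, g_n) ∈ R, of the sets of conjugacy classes of finite-order elements of the centralizer C⟨g_1,…,g_n⟩ to G \ G_{n,p,+1}, which sends the conjugacy class of a finite-order element x of C⟨g_1,…,g_n⟩ to the G-conjugacy class of the tuple (x, g_1, …, g_n), is well defined and bijective. -/

import Mathlib

/-! Every `(x, g₁, …, gₙ) ∈ G_{n,p,+1}` is conjugate to one whose tail `(g₁, …, gₙ)` is the
representative in `R` of its orbit; that representative is unique, and two such tuples with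
the same tail are conjugate exactly when their heads are conjugate under `C⟨g₁, …, gₙ⟩`, the
stabilizer of the tail. -/

/-- `pTuples G p n` is the set `G_{n,p}` of `n`-tuples of pairwise commuting elements
of `G`, each of order a power of `p`. -/
def pTuples (G : Type*) [Group G] (p n : ℕ) : Set (Fin n → G) :=
  {v | (∀ i j, Commute (v i) (v j)) ∧ ∀ i, ∃ k : ℕ, orderOf (v i) = p ^ k}

/-- Simultaneous conjugation relation on a set of tuples. -/
def tupleConj {G : Type*} [Group G] {n : ℕ} (s : Set (Fin n → G)) (a b : s) : Prop :=
  ∃ g : G, ∀ i, g * a.1 i * g⁻¹ = b.1 i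

/-- The centralizer in `G` of the subgroup generated by the entries of a tuple. -/
def tupleCentralizer {G : Type*} [Group G] {n : ℕ} (v : Fin n → G) : Subgroup G :=
  Subgroup.centralizer (Subgroup.closure (Set.range v) : Set G)

/-- `pTuplesPlus G p n` is the set `G_{n,p,+1}` of `(n+1)`-tuples `(x, g₁, …, gₙ)` of
pairwise commuting elements of `G` with `x` of finite order and each `gᵢ` of `p`-power
order. -/
def pTuplesPlus (G : Type*) [Group G] (p n : ℕ) : Set (Fin (n + 1) → G) :=
  {v | (∀ i j, Commute (v i) (v j)) ∧ IsOfFinOrder (v 0) ∧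
    ∀ i : Fin n, ∃ k : ℕ, orderOf (v i.succ) = p ^ k}

/-- The set of finite-order elements of a group. -/
def torsionSet (H : Type*) [Group H] : Set H := {x | IsOfFinOrder x}

/-- Conjugation relation on a set of elements of a group. -/
def elemConj {H : Type*} [Group H] (s : Set H) (a b : s) : Prop :=
  ∃ h : H, h * a.1 * h⁻¹ = b.1

section

variable {G : Type*} [Group G] {n : ℕ}

lemma mem_tupleCentralizer_iff {v : Fin n → G} {g : G} :
    g ∈ tupleCentralizer v ↔ ∀ i, Commute g (v i) := by
  simp only [tupleCentralizer, Subgroup.centralizer_closure, Subgroup.mem_centralizer_iff,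
    Set.forall_mem_range, Commute, SemiconjBy, eq_comm]

lemma mem_tupleCentralizer_iff_forall_conj_eq {v : Fin n → G} {g : G} :
    g ∈ tupleCentralizer v ↔ ∀ i, g * v i * g⁻¹ = v i := by
  simp only [mem_tupleCentralizer_iff, mul_inv_eq_iff_eq_mul, Commute, SemiconjBy]

lemma conj_inv_mem_tupleCentralizer {g x : G} {r r' : Fin n → G}
    (hx : x ∈ tupleCentralizer r') (hg : ∀ i, g * r i * g⁻¹ = r' i) :
    g⁻¹ * x * g ∈ tupleCentralizer r := by
  refine mem_tupleCentralizer_iff.2 fun i => ?_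
  have h := (mem_tupleCentralizer_iff.1 hx i).conj g⁻¹
  rw [← hg i] at h
  simpa [mul_assoc] using h

lemma cons_mem_pTuplesPlus_iff {p : ℕ} {x : G} {r : Fin n → G} :
    Fin.cons x r ∈ pTuplesPlus G p n ↔
      r ∈ pTuples G p n ∧ x ∈ tupleCentralizer r ∧ IsOfFinOrder x := by
  simp only [pTuplesPlus, pTuples, Set.mem_ofPred_eq, Fin.forall_fin_succ, Fin.cons_zero,
    Fin.cons_succ, mem_tupleCentralizer_iff]
  constructor
  · rintro ⟨⟨⟨-, hx⟩, hr⟩, hfin, hord⟩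
    exact ⟨⟨fun i => (hr i).2, hord⟩, hx, hfin⟩
  · rintro ⟨⟨hr, hord⟩, hx, hfin⟩
    exact ⟨⟨⟨Commute.refl x, hx⟩, fun i => ⟨(hx i).symm, hr i⟩⟩, hfin, hord⟩

lemma conj_cons_iff {g x y : G} {r r' : Fin n → G} :
    (∀ i, g * (Fin.cons x r : Fin (n + 1) → G) i * g⁻¹ = (Fin.cons y r' : Fin (n + 1) → G) i) ↔
      g * x * g⁻¹ = y ∧ ∀ i, g * r i * g⁻¹ = r' i := by
  simp only [Fin.forall_fin_succ, Fin.cons_zero, Fin.cons_succ]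

lemma tupleConj_equivalence (s : Set (Fin n → G)) : Equivalence (tupleConj s) where
  refl _ := ⟨1, fun _ => by group⟩
  symm := fun ⟨g, hg⟩ => ⟨g⁻¹, fun i => by rw [← hg i]; group⟩
  trans := fun ⟨g, hg⟩ ⟨h, hh⟩ => ⟨h * g, fun i => by rw [← hh i, ← hg i]; group⟩

lemma eq_of_conj_of_mem_representatives {s R : Set (Fin n → G)}
    (hR : ∀ v ∈ s, ∃! r, r ∈ R ∧ ∃ g : G, ∀ i, g * r i * g⁻¹ = v i)
    {r r' : Fin n → G} (hr : r ∈ R) (hr' : r' ∈ R) (hr's : r' ∈ s) {g : G}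
    (hg : ∀ i, g * r i * g⁻¹ = r' i) : r = r' :=
  (hR r' hr's).unique ⟨hr, g, hg⟩ ⟨hr', 1, fun _ => by group⟩

variable {p : ℕ} {R : Set (Fin n → G)}

def consClass (hR : R ⊆ pTuples G p n)
    (q : (r : R) × Quot (elemConj (torsionSet (tupleCentralizer r.1)))) :
    Quot (tupleConj (pTuplesPlus G p n)) :=
  Quot.lift
    (fun x => Quot.mk _ ⟨Fin.cons (x.1 : G) q.1.1,
      cons_mem_pTuplesPlus_iff.2 ⟨hR q.1.2, x.1.2, Submonoid.isOfFinOrder_coe.2 x.2⟩⟩)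
    (fun _ _ ⟨h, hxy⟩ => Quot.sound ⟨h, conj_cons_iff.2
      ⟨congrArg Subtype.val hxy, mem_tupleCentralizer_iff_forall_conj_eq.1 h.2⟩⟩)
    q.2

lemma consClass_injective (hR₁ : R ⊆ pTuples G p n)
    (hR₂ : ∀ v ∈ pTuples G p n, ∃! r, r ∈ R ∧ ∃ g : G, ∀ i, g * r i * g⁻¹ = v i) :
    Function.Injective (consClass hR₁) := by
  rintro ⟨⟨r, hr⟩, qx⟩ ⟨⟨r', hr'⟩, qy⟩ hxy
  induction qx using Quot.ind with | _ x =>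
  induction qy using Quot.ind with | _ y =>
  obtain ⟨g, hg⟩ := (tupleConj_equivalence _).eqvGen_iff.1 (Quot.eqvGen_exact hxy)
  obtain ⟨hgx, hgr⟩ := conj_cons_iff.1 hg
  obtain rfl : r = r' := eq_of_conj_of_mem_representatives hR₂ hr hr' (hR₁ hr') hgr
  have hgC : g ∈ tupleCentralizer r := mem_tupleCentralizer_iff_forall_conj_eq.2 hgr
  have hxy : Quot.mk (elemConj _) x = Quot.mk _ y := Quot.sound ⟨⟨g, hgC⟩, Subtype.ext hgx⟩
  rw [hxy]

lemma consClass_surjective (hR₁ : R ⊆ pTuples G p n)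
    (hR₂ : ∀ v ∈ pTuples G p n, ∃! r, r ∈ R ∧ ∃ g : G, ∀ i, g * r i * g⁻¹ = v i) :
    Function.Surjective (consClass hR₁) := by
  rintro ⟨v, hv⟩
  obtain ⟨x, r, rfl⟩ : ∃ x r, v = Fin.cons x r := ⟨v 0, Fin.tail v, (Fin.cons_self_tail v).symm⟩
  obtain ⟨hr, hxC, hxfin⟩ := cons_mem_pTuplesPlus_iff.1 hv
  obtain ⟨r₀, ⟨hr₀, g, hg⟩, -⟩ := hR₂ r hr
  have hx₀C := conj_inv_mem_tupleCentralizer hxC hg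
  have hx₀fin : IsOfFinOrder (g⁻¹ * x * g) :=
    (isConj_iff.2 ⟨g⁻¹, by group⟩ : IsConj x _).isOfFinOrder hxfin
  refine ⟨⟨⟨r₀, hr₀⟩, Quot.mk _ ⟨⟨_, hx₀C⟩, Submonoid.isOfFinOrder_coe.1 hx₀fin⟩⟩, ?_⟩
  exact Quot.sound ⟨g, conj_cons_iff.2 ⟨by group, hg⟩⟩

end

theorem orbit_decomposition_of_plus_tuples_general {G : Type*} [Group G] (p n : ℕ)
    (R : Set (Fin n → G)) (hR₁ : R ⊆ pTuples G p n)
    (hR₂ : ∀ v ∈ pTuples G p n, ∃! r, r ∈ R ∧ ∃ g : G, ∀ i, g * r i * g⁻¹ = v i) :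
    (∀ (r : Fin n → G), r ∈ R → ∀ x : tupleCentralizer r, IsOfFinOrder x →
        Fin.cons (x : G) r ∈ pTuplesPlus G p n) ∧
    ∃ f : ((r : R) × Quot (elemConj (torsionSet (tupleCentralizer r.1)))) →
        Quot (tupleConj (pTuplesPlus G p n)),
      Function.Bijective f ∧
      ∀ (r : R) (x : torsionSet (tupleCentralizer r.1))
        (h : Fin.cons ((x : tupleCentralizer r.1) : G) r.1 ∈ pTuplesPlus G p n),
        f ⟨r, Quot.mk _ x⟩ = Quot.mk _ ⟨Fin.cons ((x : tupleCentralizer r.1) : G) r.1, h⟩ :=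
  ⟨fun _ hr x hx => cons_mem_pTuplesPlus_iff.2 ⟨hR₁ hr, x.2, Submonoid.isOfFinOrder_coe.2 hx⟩,
    consClass hR₁, ⟨consClass_injective hR₁ hR₂, consClass_surjective hR₁ hR₂⟩, fun _ _ _ => rfl⟩

/-- Given a set `R` of representatives for the orbits of `G` on `G_{n,p}`, the map sending
the conjugacy class of a finite-order element `x` of the centralizer `C⟨g₁,…,gₙ⟩`
(for `(g₁,…,gₙ) ∈ R`) to the `G`-conjugacy class of `(x, g₁, …, gₙ)` is well defined and
bijective onto `G \ G_{n,p,+1}`. -/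
theorem orbit_decomposition_of_plus_tuples {G : Type*} [Group G] (p n : ℕ) (hp : p.Prime)
    (hn : 1 ≤ n) (R : Set (Fin n → G)) (hR₁ : R ⊆ pTuples G p n)
    (hR₂ : ∀ v ∈ pTuples G p n, ∃! r, r ∈ R ∧ ∃ g : G, ∀ i, g * r i * g⁻¹ = v i) :
    (∀ (r : Fin n → G), r ∈ R → ∀ x : tupleCentralizer r, IsOfFinOrder x →
        Fin.cons (x : G) r ∈ pTuplesPlus G p n) ∧
    ∃ f : ((r : R) × Quot (elemConj (torsionSet (tupleCentralizer r.1)))) →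
        Quot (tupleConj (pTuplesPlus G p n)),
      Function.Bijective f ∧
      ∀ (r : R) (x : torsionSet (tupleCentralizer r.1))
        (h : Fin.cons ((x : tupleCentralizer r.1) : G) r.1 ∈ pTuplesPlus G p n),
        f ⟨r, Quot.mk _ x⟩ = Quot.mk _ ⟨Fin.cons ((x : tupleCentralizer r.1) : G) r.1, h⟩ :=
  orbit_decomposition_of_plus_tuples_general p n R hR₁ hR₂
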